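/- The cubic polynomial p(v) = μ - v[1 + 7.5(1-v)^2] (the right-hand side of the reduced Stommel-Cessi model) has, as a function of the parameter μ, exactly three real roots if and only if μ lies strictly between μ₋ = (1/9)(11 - 3√(3/5)) and μ₊ = (1/9)(11 + 3√(3/5)), and the boundary values μ₋, μ₊ are exactly the parameter values at which p has a double root (saddle-node bifurcation values). -/

import Mathlib

/-!
The roots of `p` are the solutions of `Φ(v) = μ` for the cubic `Φ(v) = v(1 + 7.5(1 - v)²)`, whose
derivative is `22.5 (v - v₋)(v - v₊)` with `v∓ = (2 ∓ √(3/5))/3`. So `Φ` increases to its local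
maximum `Φ(v₋) = μ₊`, decreases to its local minimum `Φ(v₊) = μ₋` and increases again. By the
intermediate value theorem each of the three monotone branches meets the level `μ` exactly once when
`μ₋ < μ < μ₊`; otherwise all roots but possibly one critical point lie on a single branch, so there
are at most two. A double root is a root at a critical point, i.e. `μ = Φ(v₋)` or `μ = Φ(v₊)`.
-/

open Set Real

section ThreeBranches

theorem ncard_le_two_of_subset_insert {α : Type*} {S T : Set α} {x : α} (hST : S ⊆ insert x T)
    (hT : T.Subsingleton) : S.ncard ≤ 2 :=
  calc S.ncard ≤ (insert x T).ncard := ncard_le_ncard hST (hT.finite.insert x)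
    _ ≤ T.ncard + 1 := ncard_insert_le x T
    _ ≤ 1 + 1 := by
      have : Finite T := hT.finite
      gcongr
      exact ncard_le_one_iff_subsingleton.mpr hT

theorem Set.InjOn.preimage_singleton_inter_subsingleton {α β : Type*} {g : α → β} {s : Set α}
    {μ : β} (h : InjOn g s) : (g ⁻¹' {μ} ∩ s).Subsingleton :=
  fun _ hx _ hy => h hx.2 hy.2 (hx.1.trans hy.1.symm)

variable {g : ℝ → ℝ} {a b μ : ℝ}

theorem ncard_preimage_le_two_of_le_apply_right (h₁ : StrictMonoOn g (Iic a))
    (h₂ : StrictAntiOn g (Icc a b)) (h₃ : StrictMonoOn g (Ici b)) (hμ : μ ≤ g b) :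
    (g ⁻¹' {μ}).ncard ≤ 2 := by
  refine ncard_le_two_of_subset_insert (x := b) (fun y (hy : g y = μ) => ?_)
    (h₁.injOn.preimage_singleton_inter_subsingleton (μ := μ))
  rcases le_or_gt y a with hya | hay
  · exact mem_insert_of_mem _ ⟨hy, hya⟩
  rcases lt_trichotomy y b with hyb | rfl | hby
  · linarith [h₂ ⟨hay.le, hyb.le⟩ ⟨(hay.trans hyb).le, le_rfl⟩ hyb]
  · exact mem_insert _ _
  · linarith [h₃ self_mem_Ici hby.le hby]

theorem ncard_preimage_le_two_of_apply_left_le (h₁ : StrictMonoOn g (Iic a))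
    (h₂ : StrictAntiOn g (Icc a b)) (h₃ : StrictMonoOn g (Ici b)) (hμ : g a ≤ μ) :
    (g ⁻¹' {μ}).ncard ≤ 2 := by
  refine ncard_le_two_of_subset_insert (x := a) (fun y (hy : g y = μ) => ?_)
    (h₃.injOn.preimage_singleton_inter_subsingleton (μ := μ))
  rcases le_or_gt b y with hby | hyb
  · exact mem_insert_of_mem _ ⟨hy, hby⟩
  rcases lt_trichotomy a y with hay | rfl | hya
  · linarith [h₂ ⟨le_rfl, (hay.trans hyb).le⟩ ⟨hay.le, hyb.le⟩ hay]
  · exact mem_insert _ _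
  · linarith [h₁ hya.le self_mem_Iic hya]

theorem ncard_preimage_eq_three (hg : Continuous g) (hab : a ≤ b) (h₁ : StrictMonoOn g (Iic a))
    (h₂ : StrictAntiOn g (Icc a b)) (h₃ : StrictMonoOn g (Ici b)) {l r : ℝ} (hla : l ≤ a)
    (hbr : b ≤ r) (hl : g l < μ) (hr : μ < g r) (hμ : μ ∈ Ioo (g b) (g a)) :
    (g ⁻¹' {μ}).ncard = 3 := by
  obtain ⟨x₁, ⟨-, hx₁⟩, hgx₁⟩ := intermediate_value_Ioo hla hg.continuousOn ⟨hl, hμ.2⟩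
  obtain ⟨x₂, hx₂, hgx₂⟩ := intermediate_value_Ioo' hab hg.continuousOn hμ
  obtain ⟨x₃, ⟨hx₃, -⟩, hgx₃⟩ := intermediate_value_Ioo hbr hg.continuousOn ⟨hμ.1, hr⟩
  refine ncard_eq_three.mpr ⟨x₁, x₂, x₃, by linarith [hx₂.1], by linarith [hx₂.1],
    by linarith [hx₂.2], Set.ext fun y => ⟨fun (hy : g y = μ) => ?_, ?_⟩⟩
  · rcases le_or_gt y a with hya | hay
    · exact Or.inl (h₁.injOn hya hx₁.le (hy.trans hgx₁.symm))
    rcases le_or_gt y b with hyb | hby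
    · exact Or.inr (Or.inl (h₂.injOn ⟨hay.le, hyb⟩ (Ioo_subset_Icc_self hx₂) (hy.trans hgx₂.symm)))
    · exact Or.inr (Or.inr (h₃.injOn hby.le hx₃.le (hy.trans hgx₃.symm)))
  · rintro (rfl | rfl | rfl) <;> assumption

end ThreeBranches

theorem strictMonoOn_strictAntiOn_strictMonoOn_of_hasDerivAt {g : ℝ → ℝ} {a b c : ℝ}
    (hc : 0 < c) (hg : ∀ x, HasDerivAt g (c * ((x - a) * (x - b))) x) (hab : a ≤ b) :
    StrictMonoOn g (Iic a) ∧ StrictAntiOn g (Icc a b) ∧ StrictMonoOn g (Ici b) := by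
  have hcont : Continuous g := continuous_iff_continuousAt.mpr fun x => (hg x).continuousAt
  refine ⟨strictMonoOn_of_deriv_pos (convex_Iic a) hcont.continuousOn fun x hx => ?_,
    strictAntiOn_of_deriv_neg (convex_Icc a b) hcont.continuousOn fun x hx => ?_,
    strictMonoOn_of_deriv_pos (convex_Ici b) hcont.continuousOn fun x hx => ?_⟩ <;>
    simp only [interior_Iic, interior_Icc, interior_Ici, mem_Iio, mem_Ioo, mem_Ioi] at hx <;>
    rw [(hg x).deriv]
  · exact mul_pos hc (mul_pos_of_neg_of_neg (by linarith) (by linarith))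
  · exact mul_neg_of_pos_of_neg hc (mul_neg_of_pos_of_neg (by linarith) (by linarith))
  · exact mul_pos hc (mul_pos (by linarith) (by linarith))

noncomputable def stommelCessiCurve (v : ℝ) : ℝ := v * (1 + 7.5 * (1 - v) ^ 2)

theorem sqrt_three_fifths_sq : √(3 / 5) ^ 2 = 3 / 5 := sq_sqrt (by norm_num)

theorem hasDerivAt_stommelCessiCurve (x : ℝ) :
    HasDerivAt stommelCessiCurve
      (22.5 * ((x - (2 - √(3 / 5)) / 3) * (x - (2 + √(3 / 5)) / 3))) x := by
  refine ((hasDerivAt_id' x).mul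
    ((((hasDerivAt_id' x).const_sub 1).pow 2).const_mul (7.5 : ℝ) |>.const_add 1)).congr_deriv ?_
  simp only [Pi.pow_apply]
  push_cast
  linear_combination (2.5 : ℝ) * sqrt_three_fifths_sq

theorem stommelCessiCurve_monotonicity :
    StrictMonoOn stommelCessiCurve (Iic ((2 - √(3 / 5)) / 3)) ∧
      StrictAntiOn stommelCessiCurve (Icc ((2 - √(3 / 5)) / 3) ((2 + √(3 / 5)) / 3)) ∧
      StrictMonoOn stommelCessiCurve (Ici ((2 + √(3 / 5)) / 3)) :=
  strictMonoOn_strictAntiOn_strictMonoOn_of_hasDerivAt (by norm_num) hasDerivAt_stommelCessiCurve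
    (by linarith [sqrt_nonneg (3 / 5)])

theorem stommelCessiCurve_left_critical :
    stommelCessiCurve ((2 - √(3 / 5)) / 3) = 1 / 9 * (11 + 3 * √(3 / 5)) := by
  unfold stommelCessiCurve
  linear_combination (-5 * √(3 / 5) / 18) * sqrt_three_fifths_sq

theorem stommelCessiCurve_right_critical :
    stommelCessiCurve ((2 + √(3 / 5)) / 3) = 1 / 9 * (11 - 3 * √(3 / 5)) := by
  unfold stommelCessiCurve
  linear_combination (5 * √(3 / 5) / 18) * sqrt_three_fifths_sq

theorem continuous_stommelCessiCurve : Continuous stommelCessiCurve := by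
  unfold stommelCessiCurve
  fun_prop

theorem ncard_stommelCessiCurve_preimage_eq_three_iff (μ : ℝ) :
    (stommelCessiCurve ⁻¹' {μ}).ncard = 3 ↔
      1 / 9 * (11 - 3 * √(3 / 5)) < μ ∧ μ < 1 / 9 * (11 + 3 * √(3 / 5)) := by
  obtain ⟨h₁, h₂, h₃⟩ := stommelCessiCurve_monotonicity
  have hs : √(3 / 5) ≤ 1 := sqrt_le_one.mpr (by norm_num)
  have hs₀ := sqrt_nonneg (3 / 5)
  rw [← stommelCessiCurve_left_critical, ← stommelCessiCurve_right_critical]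
  refine ⟨fun h3 => ?_, fun hμ => ?_⟩
  · by_contra hμ
    rw [not_and_or, not_lt, not_lt] at hμ
    rcases hμ with hμ | hμ
    · have := ncard_preimage_le_two_of_le_apply_right h₁ h₂ h₃ hμ
      omega
    · have := ncard_preimage_le_two_of_apply_left_le h₁ h₂ h₃ hμ
      omega
  · have hl : stommelCessiCurve (-1) = -31 := by norm_num [stommelCessiCurve]
    have hr : stommelCessiCurve 2 = 17 := by norm_num [stommelCessiCurve]
    refine ncard_preimage_eq_three continuous_stommelCessiCurve (by linarith) h₁ h₂ h₃
      (l := -1) (r := 2) (by linarith) (by linarith) ?_ ?_ hμ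
    · linarith [hμ.1, stommelCessiCurve_right_critical]
    · linarith [hμ.2, stommelCessiCurve_left_critical]

theorem deriv_sub_stommelCessiCurve (μ x : ℝ) :
    deriv (fun v => μ - stommelCessiCurve v) x =
      -(22.5 * ((x - (2 - √(3 / 5)) / 3) * (x - (2 + √(3 / 5)) / 3))) :=
  ((hasDerivAt_stommelCessiCurve x).const_sub μ).deriv

theorem exists_double_root_sub_stommelCessiCurve_iff (μ : ℝ) :
    (∃ v₀, μ - stommelCessiCurve v₀ = 0 ∧ deriv (fun v => μ - stommelCessiCurve v) v₀ = 0) ↔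
      μ = 1 / 9 * (11 - 3 * √(3 / 5)) ∨ μ = 1 / 9 * (11 + 3 * √(3 / 5)) := by
  constructor
  · rintro ⟨v₀, hμ, hv₀⟩
    rw [deriv_sub_stommelCessiCurve, neg_eq_zero, mul_eq_zero, mul_eq_zero, sub_eq_zero,
      sub_eq_zero] at hv₀
    rcases hv₀ with h | rfl | rfl
    · norm_num at h
    · rw [stommelCessiCurve_left_critical, sub_eq_zero] at hμ
      exact Or.inr hμ
    · rw [stommelCessiCurve_right_critical, sub_eq_zero] at hμ
      exact Or.inl hμ
  · rintro (rfl | rfl)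
    · refine ⟨(2 + √(3 / 5)) / 3, by rw [stommelCessiCurve_right_critical, sub_self], ?_⟩
      rw [deriv_sub_stommelCessiCurve]
      ring
    · refine ⟨(2 - √(3 / 5)) / 3, by rw [stommelCessiCurve_left_critical, sub_self], ?_⟩
      rw [deriv_sub_stommelCessiCurve]
      ring

/-- Reduced Stommel–Cessi model `v̇ = μ - v[1 + 7.5(1-v)²]`:
the right-hand side has exactly three real roots iff `μ₋ < μ < μ₊` where
`μ₋ = (1/9)(11 - 3√(3/5))`, `μ₊ = (1/9)(11 + 3√(3/5))`, and `μ₋, μ₊` are exactly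
the parameter values at which a double root (saddle-node bifurcation) occurs. -/
theorem stommel_cessi_saddle_node (μ : ℝ) :
    (({v : ℝ | μ - v * (1 + 7.5 * (1 - v) ^ 2) = 0}.ncard = 3) ↔
      ((1 / 9) * (11 - 3 * Real.sqrt (3 / 5)) < μ ∧
        μ < (1 / 9) * (11 + 3 * Real.sqrt (3 / 5)))) ∧
    ((∃ v₀ : ℝ, μ - v₀ * (1 + 7.5 * (1 - v₀) ^ 2) = 0 ∧
        deriv (fun v : ℝ => μ - v * (1 + 7.5 * (1 - v) ^ 2)) v₀ = 0) ↔
      (μ = (1 / 9) * (11 - 3 * Real.sqrt (3 / 5)) ∨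
        μ = (1 / 9) * (11 + 3 * Real.sqrt (3 / 5)))) := by
  have hroots : {v : ℝ | μ - v * (1 + 7.5 * (1 - v) ^ 2) = 0} = stommelCessiCurve ⁻¹' {μ} :=
    Set.ext fun _ => sub_eq_zero.trans eq_comm
  rw [hroots]
  exact ⟨ncard_stommelCessiCurve_preimage_eq_three_iff μ,
    exists_double_root_sub_stommelCessiCurve_iff μ⟩
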